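/- arXiv:2602.20146 — 2 statements merged into one kernel-verified Lean document; each statement's English description precedes it below -/
import Mathlib

section
/- The function u_L : ℝ → ℝ given by u_L(x) = arccos(tanh x) + L·sech(x) is strictly decreasing on ℝ when 0 < L ≤ 1, and its range is the open interval (0, π). -/
/-!
`u_L' = -sech · (1 + L tanh)`, which is negative because `|L tanh| < 1`. As `x → ∓∞`,
`tanh x → ∓1` and `sech x → 0`, so `u_L` runs from `arccos (-1) = π` down to `arccos 1 = 0`;
a continuous strictly decreasing function on `ℝ` has exactly the open interval between its
two limits as range.
-/

open Real Filter Topology Set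

theorem StrictAnti.range_eq_Ioo_of_tendsto {α β : Type*} [LinearOrder α] [TopologicalSpace α]
    [ConnectedSpace α] [NoMinOrder α] [NoMaxOrder α] [LinearOrder β] [TopologicalSpace β]
    [OrderClosedTopology β] {f : α → β} {a b : β} (hf : StrictAnti f) (hfc : Continuous f)
    (hbot : Tendsto f atBot (𝓝 b)) (htop : Tendsto f atTop (𝓝 a)) : range f = Ioo a b := by
  ext y
  constructor
  · rintro ⟨x, rfl⟩
    obtain ⟨x₁, hx₁⟩ := exists_lt x
    obtain ⟨x₂, hx₂⟩ := exists_gt x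
    exact ⟨(hf.antitone.le_of_tendsto htop x₂).trans_lt (hf hx₂),
      (hf hx₁).trans_le (hf.antitone.ge_of_tendsto hbot x₁)⟩
  · rintro ⟨hay, hyb⟩
    exact mem_range_of_exists_le_of_exists_ge hfc
      ((htop.eventually_lt_const hay).exists.imp fun _ => le_of_lt)
      ((hbot.eventually_const_lt hyb).exists.imp fun _ => le_of_lt)

namespace Real

theorem one_sub_tanh_sq (x : ℝ) : 1 - tanh x ^ 2 = (1 / cosh x) ^ 2 := by
  have := cosh_sq_sub_sinh_sq x
  rw [tanh_eq_sinh_div_cosh]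
  field_simp
  linarith

theorem hasDerivAt_tanh (x : ℝ) : HasDerivAt tanh ((1 / cosh x) ^ 2) x := by
  have h := (hasDerivAt_sinh x).div (hasDerivAt_cosh x) (cosh_pos x).ne'
  rw [show tanh = sinh / cosh from funext tanh_eq_sinh_div_cosh]
  refine h.congr_deriv ?_
  rw [← one_sub_tanh_sq, tanh_eq_sinh_div_cosh]
  field_simp

theorem hasDerivAt_arccos_tanh (x : ℝ) :
    HasDerivAt (fun y => arccos (tanh y)) (-(1 / cosh x)) x := by
  have h := (hasDerivAt_arccos (neg_one_lt_tanh x).ne' (tanh_lt_one x).ne).comp x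
    (hasDerivAt_tanh x)
  rw [one_sub_tanh_sq, sqrt_sq (by positivity)] at h
  refine h.congr_deriv ?_
  field_simp

theorem hasDerivAt_sech (x : ℝ) :
    HasDerivAt (fun y => 1 / cosh y) (-(tanh x / cosh x)) x := by
  simp only [one_div]
  refine ((hasDerivAt_cosh x).inv (cosh_pos x).ne').congr_deriv ?_
  rw [tanh_eq_sinh_div_cosh]
  field_simp

theorem tendsto_cosh_atTop : Tendsto cosh atTop atTop := by
  refine tendsto_atTop_mono (fun x => ?_) (tendsto_exp_atTop.atTop_div_const two_pos)
  rw [cosh_eq]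
  linarith [exp_pos (-x)]

theorem tendsto_cosh_atBot : Tendsto cosh atBot atTop := by
  simpa [Function.comp_def] using tendsto_cosh_atTop.comp tendsto_neg_atBot_atTop

theorem tendsto_tanh_atTop : Tendsto tanh atTop (𝓝 1) := by
  have h : ∀ x, tanh x = 1 - exp (-x) * (cosh x)⁻¹ := fun x => by
    rw [tanh_eq_sinh_div_cosh, ← cosh_sub_sinh]
    field_simp
    ring
  simp only [funext h]
  simpa using tendsto_const_nhds.sub
    (tendsto_exp_neg_atTop_nhds_zero.mul tendsto_cosh_atTop.inv_tendsto_atTop)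

theorem tendsto_tanh_atBot : Tendsto tanh atBot (𝓝 (-1)) := by
  simpa [Function.comp_def] using (tendsto_tanh_atTop.comp tendsto_neg_atBot_atTop).neg

end Real

theorem hasDerivAt_arccos_tanh_add_mul_sech (L x : ℝ) :
    HasDerivAt (fun y => arccos (tanh y) + L * (1 / cosh y)) (-((1 + L * tanh x) / cosh x)) x := by
  refine ((hasDerivAt_arccos_tanh x).add ((hasDerivAt_sech x).const_mul L)).congr_deriv ?_
  ring

theorem strictAnti_arccos_tanh_add_mul_sech {L : ℝ} (hL : |L| ≤ 1) :
    StrictAnti (fun x => arccos (tanh x) + L * (1 / cosh x)) := by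
  refine strictAnti_of_hasDerivAt_neg (hasDerivAt_arccos_tanh_add_mul_sech L) fun x => ?_
  have h : |L * tanh x| < 1 := by
    rw [abs_mul]
    exact mul_lt_one_of_nonneg_of_lt_one_right hL (abs_nonneg _) (abs_tanh_lt_one x)
  exact neg_neg_of_pos (div_pos (by linarith [neg_lt_of_abs_lt h]) (cosh_pos x))

theorem tendsto_arccos_tanh_add_mul_sech_atTop (L : ℝ) :
    Tendsto (fun x => arccos (tanh x) + L * (1 / cosh x)) atTop (𝓝 0) := by
  have h := ((continuous_arccos.tendsto 1).comp tendsto_tanh_atTop).add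
    (tendsto_cosh_atTop.inv_tendsto_atTop.const_mul L)
  simpa [Function.comp_def] using h

theorem tendsto_arccos_tanh_add_mul_sech_atBot (L : ℝ) :
    Tendsto (fun x => arccos (tanh x) + L * (1 / cosh x)) atBot (𝓝 π) := by
  have h := ((continuous_arccos.tendsto (-1)).comp tendsto_tanh_atBot).add
    (tendsto_cosh_atBot.inv_tendsto_atTop.const_mul L)
  simpa [Function.comp_def] using h

/-- For `0 < L ≤ 1`, the function `u_L(x) = arccos(tanh x) + L·sech(x)` is
strictly decreasing on `ℝ` and its range is the open interval `(0, π)`. -/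
theorem uL_strictAnti_and_range (L : ℝ) (hL0 : 0 < L) (hL1 : L ≤ 1) :
    StrictAnti (fun x : ℝ => arccos (tanh x) + L * (1 / cosh x)) ∧
      Set.range (fun x : ℝ => arccos (tanh x) + L * (1 / cosh x)) = Set.Ioo 0 π := by
  have hu := strictAnti_arccos_tanh_add_mul_sech (abs_le.2 ⟨by linarith, hL1⟩)
  have hcont : Continuous (fun x : ℝ => arccos (tanh x) + L * (1 / cosh x)) :=
    continuous_iff_continuousAt.2 fun x => (hasDerivAt_arccos_tanh_add_mul_sech L x).continuousAt
  exact ⟨hu, hu.range_eq_Ioo_of_tendsto hcont (tendsto_arccos_tanh_add_mul_sech_atBot L)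
    (tendsto_arccos_tanh_add_mul_sech_atTop L)⟩
end

section
/- For every y > 0, the unique x ∈ (0, π/2) with x·sec(x) = y satisfies x ≥ y·sech(y). -/
open Real

/-- For every `y > 0`, the unique `x ∈ (0, π/2)` with `x·sec x = y` satisfies
`x ≥ y·sech y`. -/
theorem inv_xSec_ge_sech (y : ℝ) (hy : 0 < y) (x : ℝ) (hx : x ∈ Set.Ioo 0 (π / 2))
    (hxy : x * (1 / cos x) = y) : y * (1 / cosh y) ≤ x := by
  obtain ⟨hx0, hx2⟩ := hx
  have hc : 0 < cos x := Real.cos_pos_of_mem_Ioo ⟨by linarith [Real.pi_pos], hx2⟩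
  have hc1 : cos x ≤ 1 := Real.cos_le_one x
  have hx' : x = y * cos x := by field_simp at hxy; linarith
  have hcosh : 1 + y ^ 2 / 2 ≤ cosh y := by
    have h1 : cosh y = cosh (y/2) ^ 2 + sinh (y/2) ^ 2 := by
      rw [← Real.cosh_two_mul]; ring_nf
    have h2 : y/2 < sinh (y/2) := (Real.self_lt_sinh_iff).2 (by linarith)
    have h3 : cosh (y/2) ^ 2 = sinh (y/2) ^ 2 + 1 := Real.cosh_sq _
    nlinarith [h2, h3]
  have hcb : 1 - x ^ 2 / 2 ≤ cos x := Real.one_sub_sq_div_two_le_cos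
  have hch : 0 < cosh y := Real.cosh_pos y
  rw [mul_one_div, div_le_iff₀ hch]
  -- need y ≤ x * cosh y
  nlinarith [mul_le_mul_of_nonneg_left hcosh hc.le, sq_nonneg (y - x), sq_nonneg x]
end
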